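/- For every integer n ≥ 1 and every α ∈ (0, 3/n) there exists C > 0 such that for all k ∈ ℤ³ the sum over all n-tuples (ℓ₁, …, ℓₙ) ∈ (ℤ³)ⁿ with ℓ₁ + ⋯ + ℓₙ = k of ∏_{j=1}^{n} ⟨ℓ_j⟩^{−(3−α)} converges and is at most C·⟨k⟩^{−(3−nα)}. -/

import Mathlib

open Real

/-- Euclidean norm of a point of `ℤ³`. -/
noncomputable def znorm (k : Fin 3 → ℤ) : ℝ :=
  Real.sqrt (∑ i, ((k i : ℝ)) ^ 2)

/-- The quantity `⟨k⟩ = √(1 + 4π²|k|²)`. -/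
noncomputable def jnorm (k : Fin 3 → ℤ) : ℝ :=
  Real.sqrt (1 + 4 * π ^ 2 * znorm k ^ 2)

/-- sup norm on ℤ³ as a natural number -/
def NN (m : Fin 3 → ℤ) : ℕ := Finset.univ.sup fun i => (m i).natAbs

lemma NN_le_iff {m : Fin 3 → ℤ} {t : ℕ} : NN m ≤ t ↔ ∀ i, (m i).natAbs ≤ t := by
  simp [NN, Finset.sup_le_iff]

lemma le_NN (m : Fin 3 → ℤ) (i : Fin 3) : (m i).natAbs ≤ NN m := by
  rw [NN]; exact Finset.le_sup (f := fun i => (m i).natAbs) (Finset.mem_univ i)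

lemma NN_add_le (a b : Fin 3 → ℤ) : NN (a + b) ≤ NN a + NN b := by
  rw [NN]
  apply Finset.sup_le
  intro i _
  have h1 := le_NN a i
  have h2 := le_NN b i
  have : ((a + b) i) = a i + b i := rfl
  rw [this]
  have := Int.natAbs_add_le (a i) (b i)
  omega

lemma NN_sub_le (a b : Fin 3 → ℤ) : NN (a - b) ≤ NN a + NN b := by
  rw [NN]
  apply Finset.sup_le
  intro i _
  have h1 := le_NN a i
  have h2 := le_NN b i
  have : ((a - b) i) = a i - b i := rfl
  rw [this]
  have := Int.natAbs_sub_le (a i) (b i)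
  omega

lemma NN_k_le (k m : Fin 3 → ℤ) : NN k ≤ NN (k - m) + NN m := by
  have := NN_add_le (k - m) m
  simpa using this

lemma NN_m_le (k m : Fin 3 → ℤ) : NN m ≤ NN (k - m) + NN k := by
  have := NN_sub_le k (k - m)
  simpa [add_comm] using this

/-- ball of radius t in sup norm -/
noncomputable def ball3 (t : ℕ) : Finset (Fin 3 → ℤ) :=
  Fintype.piFinset fun _ => Finset.Icc (-(t:ℤ)) (t:ℤ)

lemma mem_ball3 {t : ℕ} {m : Fin 3 → ℤ} : m ∈ ball3 t ↔ NN m ≤ t := by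
  rw [ball3, Fintype.mem_piFinset, NN_le_iff]
  apply forall_congr'
  intro i
  rw [Finset.mem_Icc]
  omega

lemma card_ball3 (t : ℕ) : (ball3 t).card = (2*t+1)^3 := by
  rw [ball3, Fintype.card_piFinset]
  simp only [Int.card_Icc, Finset.prod_const, Finset.card_univ, Fintype.card_fin]
  congr 1
  omega

lemma ball3_mono {s t : ℕ} (h : s ≤ t) : ball3 s ⊆ ball3 t := by
  intro m hm
  rw [mem_ball3] at *
  omega

/-- shell of radius t -/
noncomputable def shell3 : ℕ → Finset (Fin 3 → ℤ)
  | 0 => ball3 0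
  | t+1 => ball3 (t+1) \ ball3 t

lemma mem_shell3 {t : ℕ} {m : Fin 3 → ℤ} : m ∈ shell3 t ↔ NN m = t := by
  cases t with
  | zero => rw [shell3, mem_ball3]; omega
  | succ t => rw [shell3, Finset.mem_sdiff, mem_ball3, mem_ball3]; omega

lemma card_shell3_le (t : ℕ) : (shell3 t).card ≤ 26 * (1+t)^2 := by
  cases t with
  | zero => rw [shell3, card_ball3]; norm_num
  | succ t =>
    rw [shell3, Finset.card_sdiff_of_subset (ball3_mono (Nat.le_succ t)), card_ball3, card_ball3]
    have h : (2*(t+1)+1)^3 ≤ (2*t+1)^3 + 26*(1+(t+1))^2 := by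
      zify
      nlinarith [(by positivity : (0:ℤ) ≤ (t:ℤ))]
    simp only [Nat.succ_eq_add_one]
    omega

lemma ball3_eq_biUnion (T : ℕ) :
    ball3 T = (Finset.range (T+1)).biUnion shell3 := by
  ext m
  rw [mem_ball3, Finset.mem_biUnion]
  constructor
  · intro h; exact ⟨NN m, Finset.mem_range.2 (by omega), mem_shell3.2 rfl⟩
  · rintro ⟨t, ht, hm⟩
    rw [mem_shell3] at hm
    rw [Finset.mem_range] at ht
    omega

lemma shell3_disj : ∀ s ∈ Finset.range (T+1), ∀ t ∈ Finset.range (T+1), s ≠ t →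
    Disjoint (shell3 s) (shell3 t) := by
  intro s _ t _ hst
  rw [Finset.disjoint_left]
  intro m hms hmt
  rw [mem_shell3] at hms hmt
  omega

-- FTC helper
lemma ftc_rpow (r : ℝ) (hr : r ≠ 0) (x : ℝ) (hx : 0 < x) :
    ∫ z in x..(x+1), z ^ (r-1) = ((x+1) ^ r - x ^ r) / r := by
  have h0 : (0:ℝ) ∉ Set.uIcc x (x+1) := by
    rw [Set.uIcc_of_le (by linarith)]
    intro h
    exact absurd h.1 (by linarith)
  rw [integral_rpow (Or.inr ⟨by intro h; apply hr; linarith [h], h0⟩)]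
  ring_nf

lemma integral_ge (x : ℝ) (hx : 0 < x) (r c : ℝ) (hc : ∀ z ∈ Set.Icc x (x+1), c ≤ z ^ (r-1)) :
    c ≤ ∫ z in x..(x+1), z ^ (r-1) := by
  have h0 : (0:ℝ) ∉ Set.uIcc x (x+1) := by
    rw [Set.uIcc_of_le (by linarith)]
    intro h
    exact absurd h.1 (by linarith)
  have hint : IntervalIntegrable (fun z => z ^ (r-1)) MeasureTheory.volume x (x+1) :=
    intervalIntegral.intervalIntegrable_rpow (Or.inr h0)
  have := intervalIntegral.integral_mono_on (by linarith : x ≤ x+1)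
    (intervalIntegrable_const (c := c)) hint hc
  simpa using this

-- PT1 : for p > 1 and x ≥ 1 : (p-1) * (x+1)^(-p) ≤ x^(1-p) - (x+1)^(1-p)
lemma PT1 {p : ℝ} (hp : 1 < p) {x : ℝ} (hx : 1 ≤ x) :
    (p-1) * (x+1) ^ (-p) ≤ x ^ (1-p) - (x+1) ^ (1-p) := by
  have hx0 : (0:ℝ) < x := by linarith
  have hr : (1-p) ≠ 0 := by intro h; linarith [h]
  have heq := ftc_rpow (1-p) hr x hx0
  have hge : (x+1) ^ (-p) ≤ ∫ z in x..(x+1), z ^ ((1-p)-1) := by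
    apply integral_ge x hx0
    intro z hz
    have hz0 : (0:ℝ) < z := lt_of_lt_of_le hx0 hz.1
    have : z ^ ((1-p)-1) = z ^ (-p) := by norm_num
    rw [this]
    exact Real.rpow_le_rpow_of_nonpos hz0 hz.2 (by linarith)
  rw [heq] at hge
  have hneg : (1-p) < 0 := by linarith
  -- from (x+1)^(-p) ≤ (A - B)/(1-p) with 1-p<0 : A - B ≤ (1-p)*(x+1)^(-p)
  rw [le_div_iff_of_neg hneg] at hge
  nlinarith [hge]

-- PT2 : for -1 < q < 0 and x ≥ 1 : x^q ≤ (2^(-q)/(q+1)) * ((x+1)^(q+1) - x^(q+1))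
lemma PT2 {q : ℝ} (hq1 : -1 < q) (hq0 : q < 0) {x : ℝ} (hx : 1 ≤ x) :
    x ^ q ≤ (2 ^ (-q) / (q+1)) * ((x+1) ^ (q+1) - x ^ (q+1)) := by
  have hx0 : (0:ℝ) < x := by linarith
  have hr : (q+1) ≠ 0 := by intro h; linarith [h]
  have heq := ftc_rpow (q+1) hr x hx0
  have hge : 2 ^ q * x ^ q ≤ ∫ z in x..(x+1), z ^ ((q+1)-1) := by
    apply integral_ge x hx0
    intro z hz
    have hz0 : (0:ℝ) < z := lt_of_lt_of_le hx0 hz.1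
    have h1 : z ^ ((q+1)-1) = z ^ q := by norm_num
    rw [h1]
    have h2 : (2*x) ^ q ≤ z ^ q := by
      apply Real.rpow_le_rpow_of_nonpos hz0 _ (le_of_lt hq0)
      linarith [hz.2]
    calc 2 ^ q * x ^ q = (2*x) ^ q := (Real.mul_rpow (by norm_num) (le_of_lt hx0)).symm
    _ ≤ z ^ q := h2
  rw [heq] at hge
  have hq1' : (0:ℝ) < q + 1 := by linarith
  rw [le_div_iff₀ hq1'] at hge
  have h2q : (0:ℝ) < 2 ^ q := Real.rpow_pos_of_pos (by norm_num) q
  have hkey : x ^ q ≤ (2 ^ q)⁻¹ / (q+1) * ((x+1) ^ (q+1) - x ^ (q+1)) := by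
    rw [div_mul_eq_mul_div, le_div_iff₀ hq1']
    calc x ^ q * (q+1) = (2^q)⁻¹ * (2 ^ q * x ^ q * (q+1)) := by field_simp
    _ ≤ (2^q)⁻¹ * ((x+1) ^ (q+1) - x ^ (q+1)) := by
        apply mul_le_mul_of_nonneg_left _ (by positivity)
        nlinarith [hge]
    _ = (2^q)⁻¹ * ((x+1) ^ (q+1) - x ^ (q+1)) := rfl
  rw [Real.rpow_neg (by norm_num)]
  exact hkey

-- strong claim for tail sums
lemma SC {p : ℝ} (hp : 1 < p) :
    ∀ M T : ℕ, 1 ≤ T → T ≤ M + 1 →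
    ∑ t ∈ Finset.Icc T M, ((1:ℝ)+t) ^ (-p) ≤
      (1/(p-1)) * ((T:ℝ) ^ (1-p) - ((M+1:ℕ):ℝ) ^ (1-p)) := by
  intro M
  induction M with
  | zero =>
    intro T h1 h2
    have : T = 1 := by omega
    subst this
    simp
  | succ M ih =>
    intro T h1 h2
    rcases Nat.lt_or_ge (M+1) T with h | h
    · -- T = M+2 : empty sum
      have hT : T = M + 2 := by omega
      subst hT
      rw [Finset.Icc_eq_empty (by omega), Finset.sum_empty]
      have e : ((M+2:ℕ):ℝ) = ((M+1+1:ℕ):ℝ) := by push_cast; ring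
      rw [e, sub_self, mul_zero]
    · rw [Finset.sum_Icc_succ_top (by omega : T ≤ M+1)]
      have hih := ih T h1 (by omega)
      have hpt := PT1 hp (x := (M:ℝ)+1) (by have := Nat.cast_nonneg (α := ℝ) M; linarith)
      have hc : (0:ℝ) < 1/(p-1) := by
        apply div_pos one_pos; linarith
      have key : ((1:ℝ)+(M+1:ℕ)) ^ (-p) ≤
          (1/(p-1)) * (((M+1:ℕ):ℝ) ^ (1-p) - ((M+1+1:ℕ):ℝ) ^ (1-p)) := by
        push_cast
        have e1 : (1:ℝ)+((M:ℝ)+1) = (M:ℝ)+1+1 := by ring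
        rw [e1, div_mul_eq_mul_div, le_div_iff₀ (by linarith : (0:ℝ) < p-1)]
        nlinarith [hpt]
      calc ∑ t ∈ Finset.Icc T M, ((1:ℝ)+t) ^ (-p) + ((1:ℝ)+(M+1:ℕ)) ^ (-p)
          ≤ (1/(p-1)) * ((T:ℝ) ^ (1-p) - ((M+1:ℕ):ℝ) ^ (1-p))
            + (1/(p-1)) * (((M+1:ℕ):ℝ) ^ (1-p) - ((M+1+1:ℕ):ℝ) ^ (1-p)) := by
            exact add_le_add hih key
      _ = (1/(p-1)) * ((T:ℝ) ^ (1-p) - ((M+1+1:ℕ):ℝ) ^ (1-p)) := by ring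
      _ = (1/(p-1)) * ((T:ℝ) ^ (1-p) - (((M+1)+1:ℕ):ℝ) ^ (1-p)) := by norm_num

-- S1 : tail sums of (1+t)^(-p)
lemma S1 {p : ℝ} (hp : 1 < p) :
    ∃ C : ℝ, 0 < C ∧ ∀ T M : ℕ,
      ∑ t ∈ Finset.Icc T M, ((1:ℝ)+t) ^ (-p) ≤ C * ((1:ℝ)+T) ^ (1-p) := by
  have hc : (0:ℝ) < 1/(p-1) := by apply div_pos one_pos; linarith
  refine ⟨(1/(p-1)) * 2 ^ (p-1) + 1, by positivity, ?_⟩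
  intro T M
  have hfar : ∀ T' : ℕ, 1 ≤ T' → ∑ t ∈ Finset.Icc T' M, ((1:ℝ)+t) ^ (-p) ≤
      (1/(p-1)) * ((T':ℝ)) ^ (1-p) := by
    intro T' h1
    rcases Nat.lt_or_ge M T' with h | h
    · rw [Finset.Icc_eq_empty (by omega), Finset.sum_empty]
      exact mul_nonneg hc.le (Real.rpow_nonneg (Nat.cast_nonneg T') _)
    · have := SC hp M T' h1 (by omega)
      have hnn : (0:ℝ) ≤ ((M+1:ℕ):ℝ) ^ (1-p) := by positivity
      calc ∑ t ∈ Finset.Icc T' M, ((1:ℝ)+t) ^ (-p)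
          ≤ (1/(p-1)) * ((T':ℝ) ^ (1-p) - ((M+1:ℕ):ℝ) ^ (1-p)) := this
      _ ≤ (1/(p-1)) * ((T':ℝ) ^ (1-p)) := by
          apply mul_le_mul_of_nonneg_left _ (le_of_lt hc); linarith
  have hhalf : ∀ T' : ℕ, 1 ≤ T' → ((T':ℝ)) ^ (1-p) ≤ 2 ^ (p-1) * ((1:ℝ)+T') ^ (1-p) := by
    intro T' h1
    have h1' : (1:ℝ) ≤ (T':ℝ) := by exact_mod_cast h1
    have hhalfle : ((1:ℝ)+T')/2 ≤ (T':ℝ) := by linarith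
    have h2 : ((T':ℝ)) ^ (1-p) ≤ (((1:ℝ)+T')/2) ^ (1-p) :=
      Real.rpow_le_rpow_of_nonpos (by linarith) hhalfle (by linarith)
    calc ((T':ℝ)) ^ (1-p) ≤ (((1:ℝ)+T')/2) ^ (1-p) := h2
    _ = ((1:ℝ)+T') ^ (1-p) / 2 ^ (1-p) := Real.div_rpow (by linarith) (by norm_num) (1-p)
    _ = 2 ^ (p-1) * ((1:ℝ)+T') ^ (1-p) := by
        rw [div_eq_mul_inv, ← Real.rpow_neg (by norm_num : (0:ℝ) ≤ 2)]
        ring_nf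
  rcases Nat.eq_zero_or_pos T with hT | hT
  · subst hT
    -- split off t = 0 if present
    rcases Nat.eq_zero_or_pos M with hM | hM
    · subst hM
      simp only [Finset.Icc_self, Finset.sum_singleton]
      have e : (1:ℝ)+((0:ℕ):ℝ) = 1 := by norm_num
      rw [e, Real.one_rpow, Real.one_rpow, mul_one]
      have h2pos := Real.rpow_pos_of_pos (by norm_num : (0:ℝ) < 2) (p-1)
      nlinarith [hc]
    · have hsplit : Finset.Icc 0 M = insert 0 (Finset.Icc 1 M) := by
        ext t; simp [Finset.mem_Icc, Finset.mem_insert]; omega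
      rw [hsplit, Finset.sum_insert (by simp)]
      have h2 := hfar 1 le_rfl
      have hone : ((1:ℝ)+(0:ℕ)) ^ (-p) = 1 := by norm_num
      have htwo : ((1:ℕ):ℝ) ^ (1-p) = 1 := by norm_num
      rw [htwo] at h2
      have h21 : (1:ℝ) ≤ 2 ^ (p-1) := by
        apply Real.one_le_rpow (by norm_num) (by linarith)
      have e : (1:ℝ)+((0:ℕ):ℝ) = 1 := by norm_num
      rw [e, Real.one_rpow, Real.one_rpow, mul_one]
      nlinarith [hc, h2]
  · have h1 := hfar T hT
    have h2 := hhalf T hT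
    have h0 : (0:ℝ) ≤ ((1:ℝ)+T) ^ (1-p) := by positivity
    calc ∑ t ∈ Finset.Icc T M, ((1:ℝ)+t) ^ (-p) ≤ (1/(p-1)) * ((T:ℝ)) ^ (1-p) := h1
    _ ≤ (1/(p-1)) * (2 ^ (p-1) * ((1:ℝ)+T) ^ (1-p)) :=
        mul_le_mul_of_nonneg_left h2 (le_of_lt hc)
    _ = ((1/(p-1)) * 2 ^ (p-1)) * ((1:ℝ)+T) ^ (1-p) := by ring
    _ ≤ ((1/(p-1)) * 2 ^ (p-1) + 1) * ((1:ℝ)+T) ^ (1-p) := by nlinarith [h0]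

-- S2 : partial sums of (1+t)^q for q > -1
lemma S2 {q : ℝ} (hq : -1 < q) :
    ∃ C : ℝ, 0 < C ∧ ∀ T : ℕ,
      ∑ t ∈ Finset.range (T+1), ((1:ℝ)+t) ^ q ≤ C * ((1:ℝ)+T) ^ (q+1) := by
  rcases le_or_gt 0 q with hq0 | hq0
  · refine ⟨1, one_pos, ?_⟩
    intro T
    have hterm : ∀ t ∈ Finset.range (T+1), ((1:ℝ)+t) ^ q ≤ ((1:ℝ)+T) ^ q := by
      intro t ht
      rw [Finset.mem_range] at ht
      apply Real.rpow_le_rpow (by positivity) _ hq0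
      have : (t:ℝ) ≤ (T:ℝ) := by exact_mod_cast (by omega : t ≤ T)
      linarith
    calc ∑ t ∈ Finset.range (T+1), ((1:ℝ)+t) ^ q ≤ ∑ t ∈ Finset.range (T+1), ((1:ℝ)+T) ^ q :=
        Finset.sum_le_sum hterm
    _ = (T+1) * ((1:ℝ)+T) ^ q := by rw [Finset.sum_const, Finset.card_range]; simp
    _ = ((1:ℝ)+T) ^ (1:ℝ) * ((1:ℝ)+T) ^ q := by rw [Real.rpow_one]; ring
    _ = ((1:ℝ)+T) ^ (q+1) := by rw [← Real.rpow_add (by positivity)]; ring_nf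
    _ = 1 * ((1:ℝ)+T) ^ (q+1) := by ring
  · set c : ℝ := 2 ^ (-q) / (q+1) with hc_def
    have hc : 0 < c := by
      apply div_pos (Real.rpow_pos_of_pos (by norm_num) _) (by linarith)
    refine ⟨c * 2 ^ (q+1), by positivity, ?_⟩
    intro T
    set f : ℕ → ℝ := fun t => c * ((1:ℝ)+t) ^ (q+1) with hf_def
    have hterm : ∀ t : ℕ, ((1:ℝ)+t) ^ q ≤ f (t+1) - f t := by
      intro t
      have := PT2 hq hq0 (x := (1:ℝ)+t) (by have := Nat.cast_nonneg (α := ℝ) t; linarith)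
      simp only [hf_def]
      push_cast
      calc ((1:ℝ)+t) ^ q ≤ 2 ^ (-q) / (q+1) * (((1:ℝ)+t+1) ^ (q+1) - ((1:ℝ)+t) ^ (q+1)) := this
      _ = c * ((1:ℝ)+(t+1)) ^ (q+1) - c * ((1:ℝ)+t) ^ (q+1) := by rw [hc_def]; ring_nf
    calc ∑ t ∈ Finset.range (T+1), ((1:ℝ)+t) ^ q
        ≤ ∑ t ∈ Finset.range (T+1), (f (t+1) - f t) :=
          Finset.sum_le_sum (fun t _ => hterm t)
    _ = f (T+1) - f 0 := Finset.sum_range_sub f (T+1)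
    _ ≤ f (T+1) := by
        have : 0 ≤ f 0 := by
          simp only [hf_def]
          positivity
        linarith
    _ = c * ((1:ℝ)+(T+1:ℕ)) ^ (q+1) := rfl
    _ ≤ c * 2 ^ (q+1) * ((1:ℝ)+T) ^ (q+1) := by
        have harg : ((1:ℝ)+(T+1:ℕ)) ≤ 2 * ((1:ℝ)+T) := by push_cast; linarith [Nat.cast_nonneg (α := ℝ) T]
        have h1 : ((1:ℝ)+(T+1:ℕ)) ^ (q+1) ≤ (2 * ((1:ℝ)+T)) ^ (q+1) := by
          apply Real.rpow_le_rpow (by positivity) harg (by linarith)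
        have h2 : (2 * ((1:ℝ)+T)) ^ (q+1) = 2 ^ (q+1) * ((1:ℝ)+T) ^ (q+1) :=
          Real.mul_rpow (by norm_num) (by positivity)
        calc c * ((1:ℝ)+(T+1:ℕ)) ^ (q+1) ≤ c * (2 ^ (q+1) * ((1:ℝ)+T) ^ (q+1)) :=
            mul_le_mul_of_nonneg_left (h1.trans_eq h2) hc.le
        _ = c * 2 ^ (q+1) * ((1:ℝ)+T) ^ (q+1) := by ring

lemma shell3_sum_le (s : ℝ) (t : ℕ) :
    ∑ m ∈ shell3 t, ((1:ℝ) + NN m) ^ (-s) ≤ 26 * ((1:ℝ)+t) ^ (2-s) := by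
  have heq : ∀ m ∈ shell3 t, ((1:ℝ) + NN m) ^ (-s) = ((1:ℝ)+t) ^ (-s) := by
    intro m hm
    rw [mem_shell3.1 hm]
  rw [Finset.sum_congr rfl heq, Finset.sum_const, nsmul_eq_mul]
  have hcard := card_shell3_le t
  have hpos : (0:ℝ) ≤ ((1:ℝ)+t) ^ (-s) := Real.rpow_nonneg (by positivity) _
  have h1 : ((shell3 t).card : ℝ) * ((1:ℝ)+t) ^ (-s) ≤ ((26 * (1+t)^2 : ℕ) : ℝ) * ((1:ℝ)+t) ^ (-s) := by
    apply mul_le_mul_of_nonneg_right _ hpos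
    exact_mod_cast hcard
  have h2 : ((26 * (1+t)^2 : ℕ) : ℝ) * ((1:ℝ)+t) ^ (-s) = 26 * (((1:ℝ)+t)^(2:ℕ) * ((1:ℝ)+t) ^ (-s)) := by
    push_cast
    ring
  have h3 : ((1:ℝ)+t)^(2:ℕ) * ((1:ℝ)+t) ^ (-s) = ((1:ℝ)+t) ^ (2-s) := by
    rw [← Real.rpow_natCast ((1:ℝ)+t) 2, ← Real.rpow_add (by positivity)]
    norm_num
    rw [show ((2:ℝ) + -s) = 2 - s by ring]
  rw [h2, h3] at h1
  exact h1

lemma shell3_pairwise_disjoint (u : Finset ℕ) :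
    (u : Set ℕ).PairwiseDisjoint shell3 := by
  intro a _ b _ hab
  rw [Function.onFun, Finset.disjoint_left]
  intro m hma hmb
  rw [mem_shell3] at hma hmb
  exact hab (hma.symm.trans hmb)

-- 3D ball sums
lemma L3ball {b : ℝ} (hb : b < 3) :
    ∃ C : ℝ, 0 < C ∧ ∀ T : ℕ,
      ∑ m ∈ ball3 T, ((1:ℝ) + NN m) ^ (-b) ≤ C * ((1:ℝ)+T) ^ (3-b) := by
  obtain ⟨C2, hC2, hS2⟩ := S2 (q := 2-b) (by linarith)
  refine ⟨26 * C2, by positivity, ?_⟩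
  intro T
  rw [ball3_eq_biUnion, Finset.sum_biUnion (shell3_pairwise_disjoint _)]
  calc ∑ t ∈ Finset.range (T+1), ∑ m ∈ shell3 t, ((1:ℝ) + NN m) ^ (-b)
      ≤ ∑ t ∈ Finset.range (T+1), 26 * ((1:ℝ)+t) ^ (2-b) :=
        Finset.sum_le_sum (fun t _ => shell3_sum_le b t)
  _ = 26 * ∑ t ∈ Finset.range (T+1), ((1:ℝ)+t) ^ (2-b) := by rw [Finset.mul_sum]
  _ ≤ 26 * (C2 * ((1:ℝ)+T) ^ (2-b+1)) := by
      apply mul_le_mul_of_nonneg_left _ (by norm_num)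
      exact hS2 T
  _ = 26 * C2 * ((1:ℝ)+T) ^ (3-b) := by rw [show (2-b+1 : ℝ) = 3-b by ring]; ring

-- 3D tail sums
lemma L2tail {s : ℝ} (hs : 3 < s) :
    ∃ C : ℝ, 0 < C ∧ ∀ (T : ℕ) (A : Finset (Fin 3 → ℤ)), (∀ m ∈ A, T ≤ NN m) →
      ∑ m ∈ A, ((1:ℝ) + NN m) ^ (-s) ≤ C * ((1:ℝ)+T) ^ (3-s) := by
  obtain ⟨C1, hC1, hS1⟩ := S1 (p := s-2) (by linarith)
  refine ⟨26 * C1, by positivity, ?_⟩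
  intro T A hA
  set M := A.sup NN ⊔ T with hM
  have hsub : A ⊆ (Finset.Icc T M).biUnion shell3 := by
    intro m hm
    rw [Finset.mem_biUnion]
    refine ⟨NN m, Finset.mem_Icc.2 ⟨hA m hm, ?_⟩, mem_shell3.2 rfl⟩
    exact le_trans (Finset.le_sup hm) le_sup_left
  calc ∑ m ∈ A, ((1:ℝ) + NN m) ^ (-s)
      ≤ ∑ m ∈ (Finset.Icc T M).biUnion shell3, ((1:ℝ) + NN m) ^ (-s) := by
        apply Finset.sum_le_sum_of_subset_of_nonneg hsub
        intro m _ _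
        exact Real.rpow_nonneg (by positivity) _
  _ = ∑ t ∈ Finset.Icc T M, ∑ m ∈ shell3 t, ((1:ℝ) + NN m) ^ (-s) :=
      Finset.sum_biUnion (shell3_pairwise_disjoint _)
  _ ≤ ∑ t ∈ Finset.Icc T M, 26 * ((1:ℝ)+t) ^ (2-s) :=
      Finset.sum_le_sum (fun t _ => shell3_sum_le s t)
  _ = 26 * ∑ t ∈ Finset.Icc T M, ((1:ℝ)+t) ^ (-(s-2)) := by
      rw [Finset.mul_sum]
      apply Finset.sum_congr rfl
      intro t _
      rw [show (2-s : ℝ) = -(s-2) by ring]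
  _ ≤ 26 * (C1 * ((1:ℝ)+T) ^ (1-(s-2))) := by
      apply mul_le_mul_of_nonneg_left _ (by norm_num)
      exact hS1 T M
  _ = 26 * C1 * ((1:ℝ)+T) ^ (3-s) := by rw [show (1-(s-2) : ℝ) = 3-s by ring]; ring

-- the discrete convolution estimate, finite-sum version
lemma convFin {a b : ℝ} (ha : 0 < a) (ha3 : a < 3) (hb : 0 < b) (hb3 : b < 3)
    (hab : 3 < a + b) :
    ∃ C : ℝ, 0 < C ∧ ∀ (k : Fin 3 → ℤ) (A : Finset (Fin 3 → ℤ)),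
      ∑ m ∈ A, ((1:ℝ) + NN (k - m)) ^ (-a) * ((1:ℝ) + NN m) ^ (-b) ≤
        C * ((1:ℝ) + NN k) ^ (3-(a+b)) := by
  obtain ⟨Cb, hCb, hLb⟩ := L3ball hb3
  obtain ⟨Ca, hCa, hLa⟩ := L3ball ha3
  obtain ⟨Cs, hCs, hLs⟩ := L2tail hab
  refine ⟨2^a * Cb + 2^b * Ca + 3^a * 2^(a+b-3) * Cs, by positivity, ?_⟩
  intro k A
  set K := NN k with hK
  have hKpos : (0:ℝ) < 1 + K := by positivity
  -- split A
  classical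
  set A₁ := A.filter (fun m => 2 * NN m ≤ K) with hA₁
  set A' := A.filter (fun m => ¬ 2 * NN m ≤ K) with hA'
  set A₂ := A'.filter (fun m => 2 * NN (k - m) ≤ K) with hA₂
  set A₃ := A'.filter (fun m => ¬ 2 * NN (k - m) ≤ K) with hA₃
  have hsplit : ∑ m ∈ A, ((1:ℝ) + NN (k - m)) ^ (-a) * ((1:ℝ) + NN m) ^ (-b)
      = ∑ m ∈ A₁, ((1:ℝ) + NN (k - m)) ^ (-a) * ((1:ℝ) + NN m) ^ (-b)
      + (∑ m ∈ A₂, ((1:ℝ) + NN (k - m)) ^ (-a) * ((1:ℝ) + NN m) ^ (-b)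
        + ∑ m ∈ A₃, ((1:ℝ) + NN (k - m)) ^ (-a) * ((1:ℝ) + NN m) ^ (-b)) := by
    rw [hA₁, hA₂, hA₃, hA']
    rw [Finset.sum_filter_add_sum_filter_not (A.filter (fun m => ¬ 2 * NN m ≤ K))
        (fun m => 2 * NN (k - m) ≤ K)]
    rw [Finset.sum_filter_add_sum_filter_not A (fun m => 2 * NN m ≤ K)]
  rw [hsplit]
  -- bound on A₁
  have h₁ : ∑ m ∈ A₁, ((1:ℝ) + NN (k - m)) ^ (-a) * ((1:ℝ) + NN m) ^ (-b)
      ≤ 2^a * Cb * ((1:ℝ) + K) ^ (3-(a+b)) := by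
    have hterm : ∀ m ∈ A₁, ((1:ℝ) + NN (k - m)) ^ (-a) * ((1:ℝ) + NN m) ^ (-b)
        ≤ (2^a * ((1:ℝ)+K)^(-a)) * ((1:ℝ) + NN m) ^ (-b) := by
      intro m hm
      rw [hA₁, Finset.mem_filter] at hm
      have hK2 : K ≤ 2 * NN (k - m) := by
        have := NN_k_le k m
        omega
      have hup : ((1:ℝ)+K)/2 ≤ (1:ℝ) + NN (k - m) := by
        have : (K:ℝ) ≤ 2 * (NN (k-m) : ℝ) := by exact_mod_cast hK2
        linarith
      have h1 : ((1:ℝ) + NN (k - m)) ^ (-a) ≤ (((1:ℝ)+K)/2) ^ (-a) :=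
        Real.rpow_le_rpow_of_nonpos (by positivity) hup (by linarith)
      have h2 : (((1:ℝ)+K)/2) ^ (-a) = 2^a * ((1:ℝ)+K)^(-a) := by
        rw [Real.div_rpow (by positivity) (by norm_num) (-a),
          Real.rpow_neg (by norm_num : (0:ℝ) ≤ 2)]
        field_simp
      apply mul_le_mul_of_nonneg_right _ (Real.rpow_nonneg (by positivity) _)
      rw [← h2]; exact h1
    calc ∑ m ∈ A₁, ((1:ℝ) + NN (k - m)) ^ (-a) * ((1:ℝ) + NN m) ^ (-b)
        ≤ ∑ m ∈ A₁, (2^a * ((1:ℝ)+K)^(-a)) * ((1:ℝ) + NN m) ^ (-b) :=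
          Finset.sum_le_sum hterm
    _ = (2^a * ((1:ℝ)+K)^(-a)) * ∑ m ∈ A₁, ((1:ℝ) + NN m) ^ (-b) := by
        rw [Finset.mul_sum]
    _ ≤ (2^a * ((1:ℝ)+K)^(-a)) * (Cb * ((1:ℝ)+K)^(3-b)) := by
        apply mul_le_mul_of_nonneg_left _ (by positivity)
        have hsub : A₁ ⊆ ball3 K := by
          intro m hm
          rw [hA₁, Finset.mem_filter] at hm
          rw [mem_ball3]
          omega
        calc ∑ m ∈ A₁, ((1:ℝ) + NN m) ^ (-b)
            ≤ ∑ m ∈ ball3 K, ((1:ℝ) + NN m) ^ (-b) :=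
              Finset.sum_le_sum_of_subset_of_nonneg hsub
                (fun m _ _ => Real.rpow_nonneg (by positivity) _)
        _ ≤ Cb * ((1:ℝ)+K)^(3-b) := hLb K
    _ = 2^a * Cb * (((1:ℝ)+K)^(-a) * ((1:ℝ)+K)^(3-b)) := by ring
    _ = 2^a * Cb * ((1:ℝ) + K) ^ (3-(a+b)) := by
        rw [← Real.rpow_add hKpos]
        rw [show (-a + (3-b) : ℝ) = 3-(a+b) by ring]
  -- bound on A₂
  have h₂ : ∑ m ∈ A₂, ((1:ℝ) + NN (k - m)) ^ (-a) * ((1:ℝ) + NN m) ^ (-b)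
      ≤ 2^b * Ca * ((1:ℝ) + K) ^ (3-(a+b)) := by
    have hterm : ∀ m ∈ A₂, ((1:ℝ) + NN (k - m)) ^ (-a) * ((1:ℝ) + NN m) ^ (-b)
        ≤ ((1:ℝ) + NN (k - m)) ^ (-a) * (2^b * ((1:ℝ)+K)^(-b)) := by
      intro m hm
      rw [hA₂, Finset.mem_filter, hA', Finset.mem_filter] at hm
      have hK2 : K ≤ 2 * NN m := by omega
      have hup : ((1:ℝ)+K)/2 ≤ (1:ℝ) + NN m := by
        have : (K:ℝ) ≤ 2 * (NN m : ℝ) := by exact_mod_cast hK2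
        linarith
      have h1 : ((1:ℝ) + NN m) ^ (-b) ≤ (((1:ℝ)+K)/2) ^ (-b) :=
        Real.rpow_le_rpow_of_nonpos (by positivity) hup (by linarith)
      have h2 : (((1:ℝ)+K)/2) ^ (-b) = 2^b * ((1:ℝ)+K)^(-b) := by
        rw [Real.div_rpow (by positivity) (by norm_num) (-b),
          Real.rpow_neg (by norm_num : (0:ℝ) ≤ 2)]
        field_simp
      apply mul_le_mul_of_nonneg_left _ (Real.rpow_nonneg (by positivity) _)
      rw [← h2]; exact h1
    calc ∑ m ∈ A₂, ((1:ℝ) + NN (k - m)) ^ (-a) * ((1:ℝ) + NN m) ^ (-b)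
        ≤ ∑ m ∈ A₂, ((1:ℝ) + NN (k - m)) ^ (-a) * (2^b * ((1:ℝ)+K)^(-b)) :=
          Finset.sum_le_sum hterm
    _ = (2^b * ((1:ℝ)+K)^(-b)) * ∑ m ∈ A₂, ((1:ℝ) + NN (k - m)) ^ (-a) := by
        rw [Finset.mul_sum]
        apply Finset.sum_congr rfl
        intro m _
        ring
    _ ≤ (2^b * ((1:ℝ)+K)^(-b)) * (Ca * ((1:ℝ)+K)^(3-a)) := by
        apply mul_le_mul_of_nonneg_left _ (by positivity)
        have himg : ∀ m ∈ A₂, k - m ∈ ball3 K := by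
          intro m hm
          rw [hA₂, Finset.mem_filter] at hm
          rw [mem_ball3]
          omega
        have hinj : Set.InjOn (fun m => k - m) A₂ := by
          intro x _ y _ hxy
          simpa [sub_right_inj] using hxy
        calc ∑ m ∈ A₂, ((1:ℝ) + NN (k - m)) ^ (-a)
            = ∑ m' ∈ A₂.image (fun m => k - m), ((1:ℝ) + NN m') ^ (-a) := by
              rw [Finset.sum_image]
              intro x hx y hy hxy
              exact hinj hx hy hxy
        _ ≤ ∑ m' ∈ ball3 K, ((1:ℝ) + NN m') ^ (-a) := by
              apply Finset.sum_le_sum_of_subset_of_nonneg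
              · intro m' hm'
                rw [Finset.mem_image] at hm'
                obtain ⟨m, hm, rfl⟩ := hm'
                exact himg m hm
              · intro m _ _
                exact Real.rpow_nonneg (by positivity) _
        _ ≤ Ca * ((1:ℝ)+K)^(3-a) := hLa K
    _ = 2^b * Ca * (((1:ℝ)+K)^(-b) * ((1:ℝ)+K)^(3-a)) := by ring
    _ = 2^b * Ca * ((1:ℝ) + K) ^ (3-(a+b)) := by
        rw [← Real.rpow_add hKpos]
        rw [show (-b + (3-a) : ℝ) = 3-(a+b) by ring]
  -- bound on A₃
  have h₃ : ∑ m ∈ A₃, ((1:ℝ) + NN (k - m)) ^ (-a) * ((1:ℝ) + NN m) ^ (-b)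
      ≤ 3^a * 2^(a+b-3) * Cs * ((1:ℝ) + K) ^ (3-(a+b)) := by
    have hmem : ∀ m ∈ A₃, ¬ 2 * NN m ≤ K ∧ ¬ 2 * NN (k - m) ≤ K := by
      intro m hm
      rw [hA₃, Finset.mem_filter, hA', Finset.mem_filter] at hm
      exact ⟨hm.1.2, hm.2⟩
    have hterm : ∀ m ∈ A₃, ((1:ℝ) + NN (k - m)) ^ (-a) * ((1:ℝ) + NN m) ^ (-b)
        ≤ 3^a * ((1:ℝ) + NN m) ^ (-(a+b)) := by
      intro m hm
      obtain ⟨hm1, hm2⟩ := hmem m hm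
      have hkey : 1 + NN m ≤ 3 * NN (k - m) := by
        have := NN_m_le k m
        omega
      have hup : ((1:ℝ) + NN m)/3 ≤ (1:ℝ) + NN (k - m) := by
        have : ((1:ℝ) + NN m) ≤ 3 * (NN (k-m) : ℝ) := by exact_mod_cast hkey
        have h0 : (0:ℝ) ≤ (NN (k-m) : ℝ) := Nat.cast_nonneg _
        linarith
      have h1 : ((1:ℝ) + NN (k - m)) ^ (-a) ≤ (((1:ℝ) + NN m)/3) ^ (-a) :=
        Real.rpow_le_rpow_of_nonpos (by positivity) hup (by linarith)
      have h2 : (((1:ℝ) + NN m)/3) ^ (-a) = 3^a * ((1:ℝ) + NN m)^(-a) := by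
        rw [Real.div_rpow (by positivity) (by norm_num) (-a),
          Real.rpow_neg (by norm_num : (0:ℝ) ≤ 3)]
        field_simp
      calc ((1:ℝ) + NN (k - m)) ^ (-a) * ((1:ℝ) + NN m) ^ (-b)
          ≤ (3^a * ((1:ℝ) + NN m)^(-a)) * ((1:ℝ) + NN m) ^ (-b) := by
            apply mul_le_mul_of_nonneg_right _ (Real.rpow_nonneg (by positivity) _)
            rw [← h2]; exact h1
      _ = 3^a * (((1:ℝ) + NN m)^(-a) * ((1:ℝ) + NN m) ^ (-b)) := by ring
      _ = 3^a * ((1:ℝ) + NN m) ^ (-(a+b)) := by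
          rw [← Real.rpow_add (by positivity)]
          rw [show (-a + -b : ℝ) = -(a+b) by ring]
    calc ∑ m ∈ A₃, ((1:ℝ) + NN (k - m)) ^ (-a) * ((1:ℝ) + NN m) ^ (-b)
        ≤ ∑ m ∈ A₃, 3^a * ((1:ℝ) + NN m) ^ (-(a+b)) := Finset.sum_le_sum hterm
    _ = 3^a * ∑ m ∈ A₃, ((1:ℝ) + NN m) ^ (-(a+b)) := by rw [Finset.mul_sum]
    _ ≤ 3^a * (Cs * ((1:ℝ) + ((K+1)/2 : ℕ)) ^ (3-(a+b))) := by
        apply mul_le_mul_of_nonneg_left _ (by positivity)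
        apply hLs
        intro m hm
        have := (hmem m hm).1
        omega
    _ ≤ 3^a * (Cs * (2^(a+b-3) * ((1:ℝ) + K) ^ (3-(a+b)))) := by
        apply mul_le_mul_of_nonneg_left _ (by positivity)
        apply mul_le_mul_of_nonneg_left _ (by positivity)
        have hT2 : 1 + K ≤ 2 * (1 + ((K+1)/2 : ℕ)) := by omega
        have hup : ((1:ℝ)+K)/2 ≤ (1:ℝ) + ((K+1)/2 : ℕ) := by
          have : ((1:ℝ)+K) ≤ 2 * ((1:ℝ) + ((K+1)/2 : ℕ)) := by exact_mod_cast hT2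
          linarith
        calc ((1:ℝ) + ((K+1)/2 : ℕ)) ^ (3-(a+b))
            ≤ (((1:ℝ)+K)/2) ^ (3-(a+b)) :=
              Real.rpow_le_rpow_of_nonpos (by positivity) hup (by linarith)
        _ = ((1:ℝ)+K)^(3-(a+b)) / 2^(3-(a+b)) :=
              Real.div_rpow (by positivity) (by norm_num) _
        _ = 2^(a+b-3) * ((1:ℝ) + K) ^ (3-(a+b)) := by
              rw [div_eq_mul_inv, ← Real.rpow_neg (by norm_num : (0:ℝ) ≤ 2)]
              rw [show (-(3-(a+b)) : ℝ) = a+b-3 by ring]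
              ring
    _ = 3^a * 2^(a+b-3) * Cs * ((1:ℝ) + K) ^ (3-(a+b)) := by ring
  have hnn : (0:ℝ) ≤ ((1:ℝ)+K)^(3-(a+b)) := Real.rpow_nonneg (by positivity) _
  calc ∑ m ∈ A₁, ((1:ℝ) + NN (k - m)) ^ (-a) * ((1:ℝ) + NN m) ^ (-b)
      + (∑ m ∈ A₂, ((1:ℝ) + NN (k - m)) ^ (-a) * ((1:ℝ) + NN m) ^ (-b)
        + ∑ m ∈ A₃, ((1:ℝ) + NN (k - m)) ^ (-a) * ((1:ℝ) + NN m) ^ (-b))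
      ≤ 2^a * Cb * ((1:ℝ) + K) ^ (3-(a+b))
        + (2^b * Ca * ((1:ℝ) + K) ^ (3-(a+b))
        + 3^a * 2^(a+b-3) * Cs * ((1:ℝ) + K) ^ (3-(a+b))) :=
        add_le_add h₁ (add_le_add h₂ h₃)
  _ = (2^a * Cb + 2^b * Ca + 3^a * 2^(a+b-3) * Cs) * ((1:ℝ) + K) ^ (3-(a+b)) := by ring

lemma znorm_sq (m : Fin 3 → ℤ) : znorm m ^ 2 = ∑ i, ((m i : ℝ)) ^ 2 := by
  rw [znorm, Real.sq_sqrt]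
  positivity

lemma znorm_nonneg (m : Fin 3 → ℤ) : 0 ≤ znorm m := Real.sqrt_nonneg _

lemma jnorm_pos (m : Fin 3 → ℤ) : 0 < jnorm m := by
  rw [jnorm]
  apply Real.sqrt_pos.2
  have := sq_nonneg (znorm m)
  have := sq_nonneg π
  nlinarith

lemma NN_le_znorm (m : Fin 3 → ℤ) : (NN m : ℝ) ≤ znorm m := by
  obtain ⟨i, _, hi⟩ := Finset.exists_mem_eq_sup Finset.univ ⟨0, Finset.mem_univ 0⟩
    (fun i => (m i).natAbs)
  have h1 : (NN m : ℝ)^2 ≤ znorm m ^2 := by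
    rw [znorm_sq]
    have h2 : (NN m : ℝ)^2 = ((m i : ℝ))^2 := by
      rw [NN, hi]
      rw [Nat.cast_natAbs, Int.cast_abs, sq_abs]
    rw [h2]
    apply Finset.single_le_sum (f := fun j => ((m j : ℝ))^2) (fun j _ => sq_nonneg _)
      (Finset.mem_univ i)
  have := znorm_nonneg m
  nlinarith [Nat.cast_nonneg (α := ℝ) (NN m)]

lemma znorm_sq_le (m : Fin 3 → ℤ) : znorm m ^ 2 ≤ 3 * (NN m : ℝ)^2 := by
  rw [znorm_sq]
  have h : ∀ i : Fin 3, ((m i : ℝ))^2 ≤ (NN m : ℝ)^2 := by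
    intro i
    have h1 : ((m i).natAbs : ℝ) ≤ (NN m : ℝ) := by exact_mod_cast le_NN m i
    have h2 : |(m i : ℝ)| = ((m i).natAbs : ℝ) := by
      push_cast [Nat.cast_natAbs]
      simp
    nlinarith [abs_nonneg (m i : ℝ), sq_abs (m i : ℝ)]
  calc ∑ i, ((m i : ℝ))^2 ≤ ∑ _i : Fin 3, (NN m : ℝ)^2 := Finset.sum_le_sum (fun i _ => h i)
  _ = 3 * (NN m : ℝ)^2 := by
      rw [Finset.sum_const, Finset.card_univ, Fintype.card_fin, nsmul_eq_mul]
      norm_num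

-- lower comparison : (1+NN m) ≤ √2 * jnorm m
lemma comp_lower (m : Fin 3 → ℤ) : ((1:ℝ) + NN m) ≤ Real.sqrt 2 * jnorm m := by
  have hpi : (3:ℝ) < π := Real.pi_gt_three
  have hN := NN_le_znorm m
  have hN0 : (0:ℝ) ≤ (NN m : ℝ) := Nat.cast_nonneg _
  have hz0 := znorm_nonneg m
  have hsq : ((1:ℝ) + NN m)^2 ≤ 2 * (1 + 4 * π^2 * znorm m ^2) := by
    have h9 : (9:ℝ) ≤ π^2 := by nlinarith
    have hzn : (NN m:ℝ)^2 ≤ znorm m^2 := by nlinarith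
    have hprod : (9:ℝ) * (NN m:ℝ)^2 ≤ π^2 * znorm m^2 :=
      mul_le_mul h9 hzn (sq_nonneg _) (by positivity)
    nlinarith [sq_nonneg ((NN m : ℝ) - 1)]
  have h1 : ((1:ℝ) + NN m) = Real.sqrt (((1:ℝ) + NN m)^2) := by
    rw [Real.sqrt_sq (by positivity)]
  rw [h1, jnorm, ← Real.sqrt_mul (by norm_num : (0:ℝ) ≤ 2)]
  exact Real.sqrt_le_sqrt hsq

-- upper comparison : jnorm m ≤ √(1+12π²) * (1+NN m)
lemma comp_upper (m : Fin 3 → ℤ) : jnorm m ≤ Real.sqrt (1 + 12*π^2) * ((1:ℝ) + NN m) := by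
  have hN0 : (0:ℝ) ≤ (NN m : ℝ) := Nat.cast_nonneg _
  have hz := znorm_sq_le m
  have hsq : 1 + 4 * π^2 * znorm m ^2 ≤ (1 + 12*π^2) * ((1:ℝ) + NN m)^2 := by
    nlinarith [sq_nonneg π, sq_nonneg (NN m : ℝ)]
  rw [jnorm]
  calc Real.sqrt (1 + 4 * π^2 * znorm m ^2) ≤ Real.sqrt ((1 + 12*π^2) * ((1:ℝ) + NN m)^2) :=
        Real.sqrt_le_sqrt hsq
  _ = Real.sqrt (1 + 12*π^2) * ((1:ℝ) + NN m) := by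
      rw [Real.sqrt_mul (by positivity), Real.sqrt_sq (by positivity)]

lemma sqrt2_pos : (0:ℝ) < Real.sqrt 2 := Real.sqrt_pos.2 (by norm_num)

lemma c2_pos : (0:ℝ) < Real.sqrt (1 + 12*π^2) := Real.sqrt_pos.2 (by positivity)

lemma jnorm_rpow_le (m : Fin 3 → ℤ) {c : ℝ} (hc : 0 ≤ c) :
    jnorm m ^ (-c) ≤ (Real.sqrt 2)^c * ((1:ℝ) + NN m) ^ (-c) := by
  have h1 : ((1:ℝ)+NN m)/Real.sqrt 2 ≤ jnorm m := by
    rw [div_le_iff₀ sqrt2_pos]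
    calc ((1:ℝ)+NN m) ≤ Real.sqrt 2 * jnorm m := comp_lower m
    _ = jnorm m * Real.sqrt 2 := by ring
  have h2 : jnorm m ^ (-c) ≤ (((1:ℝ)+NN m)/Real.sqrt 2) ^ (-c) :=
    Real.rpow_le_rpow_of_nonpos (by positivity) h1 (by linarith)
  have h3 : (((1:ℝ)+NN m)/Real.sqrt 2) ^ (-c) = (Real.sqrt 2)^c * ((1:ℝ)+NN m) ^ (-c) := by
    rw [Real.div_rpow (by positivity) sqrt2_pos.le (-c),
      Real.rpow_neg sqrt2_pos.le]
    field_simp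
  rw [← h3]
  exact h2

lemma jnorm_rpow_ge (m : Fin 3 → ℤ) {c : ℝ} (hc : 0 ≤ c) :
    ((1:ℝ) + NN m) ^ (-c) ≤ (Real.sqrt (1 + 12*π^2))^c * jnorm m ^ (-c) := by
  have h1 : jnorm m / Real.sqrt (1 + 12*π^2) ≤ (1:ℝ) + NN m := by
    rw [div_le_iff₀ c2_pos]
    calc jnorm m ≤ Real.sqrt (1 + 12*π^2) * ((1:ℝ) + NN m) := comp_upper m
    _ = ((1:ℝ) + NN m) * Real.sqrt (1 + 12*π^2) := by ring
  have h2 : ((1:ℝ) + NN m) ^ (-c) ≤ (jnorm m / Real.sqrt (1 + 12*π^2)) ^ (-c) :=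
    Real.rpow_le_rpow_of_nonpos (by have := jnorm_pos m; positivity) h1 (by linarith)
  have h3 : (jnorm m / Real.sqrt (1 + 12*π^2)) ^ (-c)
      = (Real.sqrt (1 + 12*π^2))^c * jnorm m ^ (-c) := by
    rw [Real.div_rpow (jnorm_pos m).le c2_pos.le (-c),
      Real.rpow_neg c2_pos.le]
    field_simp
  rw [← h3]
  exact h2

-- ENNReal convolution estimate for jnorm
lemma conv_j {a b : ℝ} (ha : 0 < a) (ha3 : a < 3) (hb : 0 < b) (hb3 : b < 3)
    (hab : 3 < a + b) :
    ∃ C : ℝ, 0 < C ∧ ∀ k : Fin 3 → ℤ,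
      ∑' m : Fin 3 → ℤ, ENNReal.ofReal (jnorm m ^ (-a) * jnorm (k - m) ^ (-b)) ≤
        ENNReal.ofReal (C * jnorm k ^ (-(a+b-3))) := by
  obtain ⟨Ch, hCh, hconv⟩ := convFin hb hb3 ha ha3 (by linarith)
  have hs2 := sqrt2_pos
  have hc2 := c2_pos
  refine ⟨(Real.sqrt 2)^a * (Real.sqrt 2)^b * Ch * (Real.sqrt (1+12*π^2))^(a+b-3),
    by positivity, ?_⟩
  intro k
  rw [ENNReal.tsum_eq_iSup_sum]
  apply iSup_le
  intro A
  rw [← ENNReal.ofReal_sum_of_nonneg (fun m _ => by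
    have := (jnorm_pos m).le
    have := (jnorm_pos (k - m)).le
    positivity)]
  apply ENNReal.ofReal_le_ofReal
  have hterm : ∀ m ∈ A, jnorm m ^ (-a) * jnorm (k - m) ^ (-b)
      ≤ ((Real.sqrt 2)^a * (Real.sqrt 2)^b) *
        (((1:ℝ) + NN (k - m)) ^ (-b) * ((1:ℝ) + NN m) ^ (-a)) := by
    intro m _
    have h1 := jnorm_rpow_le m (le_of_lt ha)
    have h2 := jnorm_rpow_le (k - m) (le_of_lt hb)
    have hnn1 : (0:ℝ) ≤ jnorm m ^ (-a) := (Real.rpow_pos_of_pos (jnorm_pos m) _).le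
    have hnn2 : (0:ℝ) ≤ (Real.sqrt 2)^a * ((1:ℝ) + NN m) ^ (-a) := by positivity
    calc jnorm m ^ (-a) * jnorm (k - m) ^ (-b)
        ≤ ((Real.sqrt 2)^a * ((1:ℝ) + NN m) ^ (-a)) *
          ((Real.sqrt 2)^b * ((1:ℝ) + NN (k - m)) ^ (-b)) := by
          apply mul_le_mul h1 h2 (Real.rpow_pos_of_pos (jnorm_pos (k-m)) _).le hnn2
    _ = ((Real.sqrt 2)^a * (Real.sqrt 2)^b) *
        (((1:ℝ) + NN (k - m)) ^ (-b) * ((1:ℝ) + NN m) ^ (-a)) := by ring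
  calc ∑ m ∈ A, jnorm m ^ (-a) * jnorm (k - m) ^ (-b)
      ≤ ∑ m ∈ A, ((Real.sqrt 2)^a * (Real.sqrt 2)^b) *
        (((1:ℝ) + NN (k - m)) ^ (-b) * ((1:ℝ) + NN m) ^ (-a)) := Finset.sum_le_sum hterm
  _ = ((Real.sqrt 2)^a * (Real.sqrt 2)^b) *
      ∑ m ∈ A, ((1:ℝ) + NN (k - m)) ^ (-b) * ((1:ℝ) + NN m) ^ (-a) := by
      rw [Finset.mul_sum]
  _ ≤ ((Real.sqrt 2)^a * (Real.sqrt 2)^b) * (Ch * ((1:ℝ) + NN k) ^ (3-(b+a))) := by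
      apply mul_le_mul_of_nonneg_left (hconv k A) (by positivity)
  _ ≤ ((Real.sqrt 2)^a * (Real.sqrt 2)^b) *
      (Ch * ((Real.sqrt (1+12*π^2))^(a+b-3) * jnorm k ^ (-(a+b-3)))) := by
      apply mul_le_mul_of_nonneg_left _ (by positivity)
      apply mul_le_mul_of_nonneg_left _ (le_of_lt hCh)
      have := jnorm_rpow_ge k (c := a+b-3) (by linarith)
      rw [show (3-(b+a) : ℝ) = -(a+b-3) by ring]
      exact this
  _ = (Real.sqrt 2)^a * (Real.sqrt 2)^b * Ch * (Real.sqrt (1+12*π^2))^(a+b-3) *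
      jnorm k ^ (-(a+b-3)) := by ring

-- main estimate, ENNReal indicator form
lemma main_ennreal (α : ℝ) (hα : 0 < α) :
    ∀ n : ℕ, 1 ≤ n → (n:ℝ)*α < 3 →
    ∃ C : ℝ, 0 < C ∧ ∀ k : Fin 3 → ℤ,
      (∑' ℓ : Fin n → (Fin 3 → ℤ),
        if (∑ j, ℓ j) = k then ENNReal.ofReal (∏ j, jnorm (ℓ j) ^ (-(3-α))) else 0)
        ≤ ENNReal.ofReal (C * jnorm k ^ (-(3-(n:ℝ)*α))) := by
  intro n hn
  induction n, hn using Nat.le_induction with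
  | base =>
    intro h1
    refine ⟨1, one_pos, ?_⟩
    intro k
    have hsingle : ∀ ℓ : Fin 1 → (Fin 3 → ℤ), ℓ ≠ (fun _ => k) →
        (if (∑ j, ℓ j) = k then ENNReal.ofReal (∏ j, jnorm (ℓ j) ^ (-(3-α))) else 0) = 0 := by
      intro ℓ hℓ
      rw [if_neg]
      intro hsum
      apply hℓ
      funext j
      have hj : j = 0 := Subsingleton.elim _ _
      rw [hj]
      rw [Fin.sum_univ_one] at hsum
      exact hsum
    rw [tsum_eq_single (fun _ => k) hsingle]
    rw [if_pos (by rw [Fin.sum_univ_one])]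
    rw [Fin.prod_univ_one]
    apply ENNReal.ofReal_le_ofReal
    rw [Nat.cast_one, one_mul, one_mul]
  | succ n hn ih =>
    intro hs
    push_cast at hs
    have h1 : (1:ℝ) ≤ (n:ℝ) := by exact_mod_cast hn
    have hone : α ≤ (n:ℝ)*α := by nlinarith [mul_le_mul_of_nonneg_right h1 hα.le]
    have hα3 : α < 3 := by linarith
    have hnα : (n:ℝ)*α < 3 := by linarith
    obtain ⟨Cn, hCn, hihk⟩ := ih hnα
    have hb0 : 0 < 3-(n:ℝ)*α := by linarith
    have hb3 : 3-(n:ℝ)*α < 3 := by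
      have : 0 < (n:ℝ)*α := by
        have h1 : (1:ℝ) ≤ (n:ℝ) := by exact_mod_cast hn
        nlinarith
      linarith
    have habs : 3 < (3-α) + (3-(n:ℝ)*α) := by linarith
    obtain ⟨Cc, hCc, hconv⟩ := conv_j (a := 3-α) (by linarith) (by linarith)
      hb0 hb3 habs
    refine ⟨Cn * Cc, by positivity, ?_⟩
    intro k
    -- rewrite the (n+1)-fold sum via cons
    have e := Fin.consEquiv (fun _ : Fin (n+1) => (Fin 3 → ℤ))
    rw [← Equiv.tsum_eq (Fin.consEquiv (fun _ : Fin (n+1) => (Fin 3 → ℤ)))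
      (fun ℓ => if (∑ j, ℓ j) = k then ENNReal.ofReal (∏ j, jnorm (ℓ j) ^ (-(3-α))) else 0)]
    rw [ENNReal.tsum_prod']
    have hstep1 : ∀ x : Fin 3 → ℤ, ∀ ℓ : Fin n → (Fin 3 → ℤ),
        (if (∑ j, (Fin.consEquiv (fun _ : Fin (n+1) => (Fin 3 → ℤ))) (x, ℓ) j) = k
          then ENNReal.ofReal (∏ j, jnorm ((Fin.consEquiv (fun _ : Fin (n+1) => (Fin 3 → ℤ))) (x, ℓ) j) ^ (-(3-α))) else 0)
        = ENNReal.ofReal (jnorm x ^ (-(3-α))) *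
          (if (∑ j, ℓ j) = k - x then ENNReal.ofReal (∏ j, jnorm (ℓ j) ^ (-(3-α))) else 0) := by
      intro x ℓ
      have happ : (Fin.consEquiv (fun _ : Fin (n+1) => (Fin 3 → ℤ))) (x, ℓ) = Fin.cons x ℓ := rfl
      rw [happ]
      have hsum : (∑ j, (Fin.cons x ℓ : Fin (n+1) → (Fin 3 → ℤ)) j) = x + ∑ j, ℓ j :=
        Fin.sum_cons x ℓ
      have hprod : (∏ j, jnorm ((Fin.cons x ℓ : Fin (n+1) → (Fin 3 → ℤ)) j) ^ (-(3-α)))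
          = jnorm x ^ (-(3-α)) * ∏ j, jnorm (ℓ j) ^ (-(3-α)) := by
        rw [← Fin.prod_cons (jnorm x ^ (-(3-α))) (fun j => jnorm (ℓ j) ^ (-(3-α)))]
        apply Finset.prod_congr rfl
        intro j _
        refine Fin.cases ?_ ?_ j
        · simp
        · intro i
          simp
      rw [hsum, hprod]
      have hcond : (x + ∑ j, ℓ j = k) ↔ ((∑ j, ℓ j) = k - x) := by
        constructor
        · intro h; rw [← h]; abel
        · intro h; rw [h]; abel
      by_cases hc : (∑ j, ℓ j) = k - x
      · rw [if_pos (hcond.2 hc), if_pos hc,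
          ENNReal.ofReal_mul (Real.rpow_pos_of_pos (jnorm_pos x) _).le]
      · rw [if_neg (fun h => hc (hcond.1 h)), if_neg hc, mul_zero]
    calc ∑' (x : Fin 3 → ℤ) (ℓ : Fin n → (Fin 3 → ℤ)),
        (if (∑ j, (Fin.consEquiv (fun _ : Fin (n+1) => (Fin 3 → ℤ))) (x, ℓ) j) = k
          then ENNReal.ofReal (∏ j, jnorm ((Fin.consEquiv (fun _ : Fin (n+1) => (Fin 3 → ℤ))) (x, ℓ) j) ^ (-(3-α))) else 0)
        = ∑' (x : Fin 3 → ℤ), ENNReal.ofReal (jnorm x ^ (-(3-α))) *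
          ∑' (ℓ : Fin n → (Fin 3 → ℤ)),
            (if (∑ j, ℓ j) = k - x then ENNReal.ofReal (∏ j, jnorm (ℓ j) ^ (-(3-α))) else 0) := by
          apply tsum_congr
          intro x
          rw [← ENNReal.tsum_mul_left]
          apply tsum_congr
          intro ℓ
          exact hstep1 x ℓ
    _ ≤ ∑' (x : Fin 3 → ℤ), ENNReal.ofReal (jnorm x ^ (-(3-α))) *
          ENNReal.ofReal (Cn * jnorm (k - x) ^ (-(3-(n:ℝ)*α))) := by
          apply ENNReal.tsum_le_tsum
          intro x
          exact mul_le_mul_right (hihk (k - x)) _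
    _ = ∑' (x : Fin 3 → ℤ), ENNReal.ofReal Cn *
          ENNReal.ofReal (jnorm x ^ (-(3-α)) * jnorm (k - x) ^ (-(3-(n:ℝ)*α))) := by
          apply tsum_congr
          intro x
          rw [← ENNReal.ofReal_mul (Real.rpow_pos_of_pos (jnorm_pos x) _).le]
          rw [show jnorm x ^ (-(3-α)) * (Cn * jnorm (k-x) ^ (-(3-(n:ℝ)*α)))
            = Cn * (jnorm x ^ (-(3-α)) * jnorm (k-x) ^ (-(3-(n:ℝ)*α))) from by ring]
          rw [ENNReal.ofReal_mul hCn.le]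
    _ = ENNReal.ofReal Cn * ∑' (x : Fin 3 → ℤ),
          ENNReal.ofReal (jnorm x ^ (-(3-α)) * jnorm (k - x) ^ (-(3-(n:ℝ)*α))) :=
          ENNReal.tsum_mul_left
    _ ≤ ENNReal.ofReal Cn * ENNReal.ofReal (Cc * jnorm k ^ (-((3-α)+(3-(n:ℝ)*α)-3))) :=
          mul_le_mul_right (hconv k) _
    _ = ENNReal.ofReal (Cn * Cc * jnorm k ^ (-(3-((n:ℕ)+1:ℝ)*α))) := by
          rw [← ENNReal.ofReal_mul hCn.le, ← mul_assoc]
          rw [show (-((3-α)+(3-(n:ℝ)*α)-3) : ℝ) = -(3-((n:ℕ)+1:ℝ)*α) by push_cast; ring]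
    _ = ENNReal.ofReal (Cn * Cc * jnorm k ^ (-(3-((n+1:ℕ):ℝ)*α))) := by push_cast; ring_nf

/-- for every `n ≥ 1` and `α ∈ (0, 3/n)` there is `C > 0` such that for all
`k ∈ ℤ³` the sum over all `(ℓ₁,…,ℓₙ)` with `ℓ₁+⋯+ℓₙ = k` of `∏_j ⟨ℓ_j⟩^(−(3−α))`
converges and is at most `C·⟨k⟩^(−(3−nα))`. -/
theorem stmt_3 :
    ∀ n : ℕ, 1 ≤ n → ∀ α : ℝ, α ∈ Set.Ioo 0 (3 / (n : ℝ)) →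
      ∃ C : ℝ, 0 < C ∧ ∀ k : Fin 3 → ℤ,
        Summable (fun ℓ : {ℓ : Fin n → (Fin 3 → ℤ) // ∑ j, ℓ j = k} =>
          ∏ j, jnorm (ℓ.1 j) ^ (-(3 - α))) ∧
        (∑' ℓ : {ℓ : Fin n → (Fin 3 → ℤ) // ∑ j, ℓ j = k},
          ∏ j, jnorm (ℓ.1 j) ^ (-(3 - α))) ≤ C * jnorm k ^ (-(3 - (n : ℝ) * α)) := by
  intro n hn α hα
  obtain ⟨hα0, hα3⟩ := hα
  have hnpos : (0:ℝ) < (n:ℝ) := by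
    have : (1:ℝ) ≤ (n:ℝ) := by exact_mod_cast hn
    linarith
  have hnα : (n:ℝ)*α < 3 := by
    rw [lt_div_iff₀ hnpos] at hα3
    linarith
  obtain ⟨C, hC, hbd⟩ := main_ennreal α hα0 n hn hnα
  refine ⟨C, hC, ?_⟩
  intro k
  -- notation
  set f : {ℓ : Fin n → (Fin 3 → ℤ) // ∑ j, ℓ j = k} → ℝ :=
    fun ℓ => ∏ j, jnorm (ℓ.1 j) ^ (-(3 - α)) with hf
  have hfnn : ∀ ℓ, 0 ≤ f ℓ := by
    intro ℓ
    apply Finset.prod_nonneg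
    intro j _
    exact (Real.rpow_pos_of_pos (jnorm_pos _) _).le
  -- the ENNReal tsum over the subtype equals the indicator tsum
  have hY : (∑' ℓ : {ℓ : Fin n → (Fin 3 → ℤ) // ∑ j, ℓ j = k}, ENNReal.ofReal (f ℓ))
      = ∑' ℓ : Fin n → (Fin 3 → ℤ),
        (if (∑ j, ℓ j) = k then ENNReal.ofReal (∏ j, jnorm (ℓ j) ^ (-(3-α))) else 0) := by
    rw [show (∑' ℓ : {ℓ : Fin n → (Fin 3 → ℤ) // ∑ j, ℓ j = k}, ENNReal.ofReal (f ℓ))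
        = ∑' ℓ : ({ℓ : Fin n → (Fin 3 → ℤ) | ∑ j, ℓ j = k} : Set _),
          ENNReal.ofReal (∏ j, jnorm (ℓ.1 j) ^ (-(3-α))) from rfl]
    rw [tsum_subtype ({ℓ : Fin n → (Fin 3 → ℤ) | ∑ j, ℓ j = k} : Set _)
      (fun ℓ => ENNReal.ofReal (∏ j, jnorm (ℓ j) ^ (-(3-α))))]
    apply tsum_congr
    intro ℓ
    by_cases h : (∑ j, ℓ j) = k
    · rw [Set.indicator_of_mem (by exact h), if_pos h]
    · rw [Set.indicator_of_notMem (by exact h), if_neg h]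
  have hYle : (∑' ℓ : {ℓ : Fin n → (Fin 3 → ℤ) // ∑ j, ℓ j = k}, ENNReal.ofReal (f ℓ))
      ≤ ENNReal.ofReal (C * jnorm k ^ (-(3-(n:ℝ)*α))) := by
    rw [hY]; exact hbd k
  have hYfin : (∑' ℓ : {ℓ : Fin n → (Fin 3 → ℤ) // ∑ j, ℓ j = k}, ENNReal.ofReal (f ℓ)) ≠ ⊤ :=
    ne_top_of_le_ne_top ENNReal.ofReal_ne_top hYle
  -- summability
  set g : {ℓ : Fin n → (Fin 3 → ℤ) // ∑ j, ℓ j = k} → NNReal :=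
    fun ℓ => Real.toNNReal (f ℓ) with hg
  have hcoe : ∀ ℓ, ENNReal.ofReal (f ℓ) = (g ℓ : ENNReal) := fun ℓ => rfl
  have hsumNN : Summable g := by
    rw [← ENNReal.tsum_coe_ne_top_iff_summable]
    rw [← tsum_congr hcoe]
    exact hYfin
  have hsum : Summable f := by
    have h2 := NNReal.summable_coe.2 hsumNN
    have he : (fun ℓ => (g ℓ : ℝ)) = f := by
      funext ℓ
      exact Real.coe_toNNReal _ (hfnn ℓ)
    rwa [he] at h2
  refine ⟨hsum, ?_⟩
  -- value bound
  have hofreal : ENNReal.ofReal (∑' ℓ, f ℓ)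
      = ∑' ℓ : {ℓ : Fin n → (Fin 3 → ℤ) // ∑ j, ℓ j = k}, ENNReal.ofReal (f ℓ) :=
    ENNReal.ofReal_tsum_of_nonneg hfnn hsum
  have hfinal : ENNReal.ofReal (∑' ℓ, f ℓ) ≤ ENNReal.ofReal (C * jnorm k ^ (-(3-(n:ℝ)*α))) := by
    rw [hofreal]; exact hYle
  rw [ENNReal.ofReal_le_ofReal_iff (by have := jnorm_pos k; positivity)] at hfinal
  exact hfinal
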